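/- arXiv:1101.1934 — 5 statements merged into one kernel-verified Lean document; each statement's English description precedes it below -/
import Mathlib

section
/- For a discrete memoryless channel with finite input alphabet X, finite output alphabet Y, and transition matrix W with all entries positive, the function J(R) := max over λ ∈ [0,1], x₁,x₂ ∈ X, P₁,P₂ probability distributions on X subject to λ·I(P₁,W) + (1−λ)·I(P₂,W) ≥ R, of λ·D(Q₁‖W_{x₁}) + (1−λ)·D(Q₂‖W_{x₂}) (where Q_i(y) = Σ_x P_i(x)W(y|x) and W_x is the row of W at x) is a concave, non-increasing function of R on (−∞, C], where C is the channel capacity. -/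
open scoped BigOperators

noncomputable section

/-- A probability distribution on a finite set, given as a nonnegative function summing to one. -/
def IsDist {X : Type*} [Fintype X] (p : X → ℝ) : Prop :=
  (∀ x, 0 ≤ p x) ∧ ∑ x, p x = 1

/-- Kullback–Leibler divergence between two distributions on a finite set. -/
def klDiv {Y : Type*} [Fintype Y] (p q : Y → ℝ) : ℝ :=
  ∑ y, p y * Real.log (p y / q y)

/-- Output distribution induced by input distribution `P` over the channel `W`. -/
def outDist {X Y : Type*} [Fintype X] (W : X → Y → ℝ) (P : X → ℝ) (y : Y) : ℝ :=
  ∑ x, P x * W x y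

/-- Mutual information `I(P, W)` of input distribution `P` over channel `W`. -/
def mutInfo {X Y : Type*} [Fintype X] [Fintype Y] (W : X → Y → ℝ) (P : X → ℝ) : ℝ :=
  ∑ x, P x * klDiv (W x) (outDist W P)

/-- Channel capacity `C = max_P I(P, W)`. -/
def capacity {X Y : Type*} [Fintype X] [Fintype Y] (W : X → Y → ℝ) : ℝ :=
  sSup { c | ∃ P : X → ℝ, IsDist P ∧ c = mutInfo W P }

/-- The two-phase exponent function `J(R)`: the supremum over time-sharing constants
`λ ∈ [0,1]`, input letters `x₁, x₂` and input distributions `P₁, P₂` with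
`λ I(P₁,W) + (1-λ) I(P₂,W) ≥ R` of `λ D(Q₁‖W_{x₁}) + (1-λ) D(Q₂‖W_{x₂})`. -/
def Jfun {X Y : Type*} [Fintype X] [Fintype Y] (W : X → Y → ℝ) (R : ℝ) : ℝ :=
  sSup { v | ∃ (lam : ℝ) (x₁ x₂ : X) (P₁ P₂ : X → ℝ),
      0 ≤ lam ∧ lam ≤ 1 ∧ IsDist P₁ ∧ IsDist P₂ ∧
      R ≤ lam * mutInfo W P₁ + (1 - lam) * mutInfo W P₂ ∧
      v = lam * klDiv (outDist W P₁) (W x₁) + (1 - lam) * klDiv (outDist W P₂) (W x₂) }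

/-!
`J(R)` is the largest value of a time-sharing of two points `(I(P,W), D(Q_P‖W_x))` at rate at
least `R`. For `R < C` some line of slope `s ≤ 0` through `(R, J(R))` lies above every such
point: take `s` the supremum of the slopes towards points of rate above `R`; a point of rate below
`R` stays under the line because its time-sharing with any point above `R`, taken at rate exactly
`R`, is worth at most `J(R)`. Mixtures of points then stay under the line as well, so
`J(R') ≤ J(R) + s (R' - R)` for all `R' ≤ C`. A nonpositive supergradient at every `R < C` makes
`J` concave and non-increasing on `(-∞, C]`; the capacity being attained (by compactness of the
simplex) keeps the constraint set nonempty up to `C`.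
-/

open Set

section TimeSharing

def timeSharingSet {ι : Type*} (r v : ι → ℝ) (R : ℝ) : Set ℝ :=
  {u | ∃ (t : ℝ) (i j : ι), 0 ≤ t ∧ t ≤ 1 ∧ R ≤ t * r i + (1 - t) * r j ∧
    u = t * v i + (1 - t) * v j}

def timeSharingSup {ι : Type*} (r v : ι → ℝ) (R : ℝ) : ℝ :=
  sSup (timeSharingSet r v R)

variable {ι : Type*} {r v : ι → ℝ}

lemma timeSharingSet_nonempty {R : ℝ} {i : ι} (h : R ≤ r i) :
    (timeSharingSet r v R).Nonempty :=
  ⟨v i, 1, i, i, zero_le_one, le_rfl, by simpa using h, by simp⟩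

lemma bddAbove_timeSharingSet (hv : BddAbove (range v)) (R : ℝ) :
    BddAbove (timeSharingSet r v R) := by
  obtain ⟨B, hB⟩ := hv
  refine ⟨B, ?_⟩
  rintro _ ⟨t, i, j, ht0, ht1, -, rfl⟩
  have hi : v i ≤ B := hB (mem_range_self i)
  have hj : v j ≤ B := hB (mem_range_self j)
  nlinarith

lemma mix_le_timeSharingSup (hv : BddAbove (range v)) {R t : ℝ} {i j : ι}
    (ht0 : 0 ≤ t) (ht1 : t ≤ 1) (hR : R ≤ t * r i + (1 - t) * r j) :
    t * v i + (1 - t) * v j ≤ timeSharingSup r v R :=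
  le_csSup (bddAbove_timeSharingSet hv R) ⟨t, i, j, ht0, ht1, hR, rfl⟩

/-- The slope is the supremum of the slopes from `(R, V)` to the points to the right of `R`. -/
lemma exists_supporting_slope {R V : ℝ} (hR : ∃ i, R < r i)
    (h_ge : ∀ i, R ≤ r i → v i ≤ V)
    (h_cross : ∀ i j, r j < R → R < r i → (r i - R) * (v j - V) ≤ (r j - R) * (v i - V)) :
    ∃ s ≤ 0, ∀ i, v i - V ≤ s * (r i - R) := by
  set slopes := {q | ∃ i, R < r i ∧ q = (v i - V) / (r i - R)}
  have h_nonpos : ∀ q ∈ slopes, q ≤ 0 := by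
    rintro _ ⟨i, hi, rfl⟩
    exact div_nonpos_of_nonpos_of_nonneg (by linarith [h_ge i hi.le]) (by linarith)
  obtain ⟨i₀, hi₀⟩ := hR
  have h_ne : slopes.Nonempty := ⟨_, i₀, hi₀, rfl⟩
  refine ⟨sSup slopes, csSup_le h_ne h_nonpos, fun j => ?_⟩
  rcases lt_trichotomy (r j) R with hj | hj | hj
  · have h_le : sSup slopes ≤ (v j - V) / (r j - R) := by
      refine csSup_le h_ne ?_
      rintro _ ⟨i, hi, rfl⟩
      rw [div_le_iff₀ (by linarith), div_mul_eq_mul_div, le_div_iff_of_neg (by linarith)]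
      linarith [h_cross i j hj hi]
    rwa [le_div_iff_of_neg (by linarith)] at h_le
  · simp [hj, h_ge j hj.ge]
  · rw [← div_le_iff₀ (by linarith)]
    exact le_csSup ⟨0, h_nonpos⟩ ⟨j, hj, rfl⟩

lemma exists_timeSharingSup_le_add_mul (hv : BddAbove (range v)) {R : ℝ} (hR : ∃ i, R < r i) :
    ∃ s ≤ 0, ∀ R', (∃ i, R' ≤ r i) →
      timeSharingSup r v R' ≤ timeSharingSup r v R + s * (R' - R) := by
  set V := timeSharingSup r v R
  have h_ge : ∀ i, R ≤ r i → v i ≤ V := fun i hi => by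
    simpa using mix_le_timeSharingSup hv (j := i) zero_le_one le_rfl (by simpa using hi)
  have h_cross : ∀ i j, r j < R → R < r i → (r i - R) * (v j - V) ≤ (r j - R) * (v i - V) := by
    intro i j hj hi
    have hd : 0 < r i - r j := by linarith
    -- the time-sharing constant that puts the mixture of `i` and `j` exactly at rate `R`
    have h_mix := mix_le_timeSharingSup hv (R := R) (t := (R - r j) / (r i - r j)) (i := i) (j := j)
      (div_nonneg (by linarith) hd.le) ((div_le_one hd).2 (by linarith))
      (le_of_eq (by field_simp; ring))
    rw [show (R - r j) / (r i - r j) * v i + (1 - (R - r j) / (r i - r j)) * v j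
        = ((R - r j) * v i + (r i - R) * v j) / (r i - r j) by field_simp; ring,
      div_le_iff₀ hd] at h_mix
    linarith
  obtain ⟨s, hs0, hs⟩ := exists_supporting_slope hR h_ge h_cross
  refine ⟨s, hs0, fun R' ⟨k, hk⟩ => csSup_le (timeSharingSet_nonempty hk) ?_⟩
  rintro _ ⟨t, i, j, ht0, ht1, hR', rfl⟩
  linarith [mul_le_mul_of_nonneg_left (hs i) ht0,
    mul_le_mul_of_nonneg_left (hs j) (sub_nonneg.2 ht1), mul_le_mul_of_nonpos_left hR' hs0]

end TimeSharing

section Supergradient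

variable {f : ℝ → ℝ} {c : ℝ}

lemma concaveOn_Iic_of_supergradient
    (h : ∀ x < c, ∃ s, ∀ y ≤ c, f y ≤ f x + s * (y - x)) : ConcaveOn ℝ (Iic c) f := by
  refine concaveOn_iff_pairwise_pos.2 ⟨convex_Iic c, fun y₁ hy₁ y₂ hy₂ hne a b ha hb hab => ?_⟩
  simp only [smul_eq_mul] at *
  obtain rfl : b = 1 - a := by linarith
  have hx : a * y₁ + (1 - a) * y₂ < c := by
    rcases hne.lt_or_gt with h₁₂ | h₁₂
    · linarith [mul_lt_mul_of_pos_left h₁₂ ha, mem_Iic.1 hy₂]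
    · linarith [mul_lt_mul_of_pos_left h₁₂ hb, mem_Iic.1 hy₁]
  obtain ⟨s, hs⟩ := h _ hx
  linarith [mul_le_mul_of_nonneg_left (hs y₁ hy₁) ha.le,
    mul_le_mul_of_nonneg_left (hs y₂ hy₂) hb.le]

lemma antitoneOn_Iic_of_supergradient
    (h : ∀ x < c, ∃ s ≤ 0, ∀ y ≤ c, f y ≤ f x + s * (y - x)) : AntitoneOn f (Iic c) := by
  intro x hx y hy hxy
  obtain rfl | hxy := hxy.eq_or_lt
  · rfl
  obtain ⟨s, hs0, hs⟩ := h x (hxy.trans_le hy)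
  linarith [hs y hy, mul_nonpos_of_nonpos_of_nonneg hs0 (sub_nonneg.2 hxy.le)]

end Supergradient

theorem timeSharingSup_concaveOn_antitoneOn {ι : Type*} {r v : ι → ℝ} (hv : BddAbove (range v))
    {c : ℝ} (hc : ∃ i, c ≤ r i) :
    ConcaveOn ℝ (Iic c) (timeSharingSup r v) ∧ AntitoneOn (timeSharingSup r v) (Iic c) := by
  obtain ⟨i₀, hi₀⟩ := hc
  have h : ∀ R < c, ∃ s ≤ 0, ∀ R' ≤ c,
      timeSharingSup r v R' ≤ timeSharingSup r v R + s * (R' - R) := fun R hR =>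
    (exists_timeSharingSup_le_add_mul hv ⟨i₀, hR.trans_le hi₀⟩).imp fun _ ⟨hs0, hs⟩ =>
      ⟨hs0, fun R' hR' => hs R' ⟨i₀, hR'.trans hi₀⟩⟩
  exact ⟨concaveOn_Iic_of_supergradient fun R hR => (h R hR).imp fun _ hs => hs.2,
    antitoneOn_Iic_of_supergradient h⟩

section Channel

variable {X Y : Type*} [Fintype X]

lemma IsDist.exists_pos {p : X → ℝ} (hp : IsDist p) : ∃ x, 0 < p x := by
  by_contra! h
  linarith [hp.2, Finset.sum_nonpos fun x (_ : x ∈ Finset.univ) => h x]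

lemma IsDist.le_one {p : X → ℝ} (hp : IsDist p) (x : X) : p x ≤ 1 :=
  hp.2 ▸ Finset.single_le_sum (fun i _ => hp.1 i) (Finset.mem_univ x)

lemma klDiv_le_neg_log {p q : X → ℝ} {m : ℝ} (hp : IsDist p) (hm : 0 < m)
    (hq : ∀ x, m ≤ q x) : klDiv p q ≤ -Real.log m := by
  calc klDiv p q ≤ ∑ x, p x * -Real.log m := by
        refine Finset.sum_le_sum fun x _ => ?_
        rcases (hp.1 x).eq_or_lt with h | h
        · simp [← h]
        refine mul_le_mul_of_nonneg_left ?_ h.le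
        rw [← Real.log_inv]
        exact Real.log_le_log (div_pos h (hm.trans_le (hq x)))
          (div_le_div₀ zero_le_one (hp.le_one x) hm (hq x) |>.trans_eq (one_div m))
    _ = -Real.log m := by rw [← Finset.sum_mul, hp.2, one_mul]

variable {W : X → Y → ℝ}

lemma outDist_pos (hpos : ∀ x y, 0 < W x y) {P : X → ℝ} (hP : IsDist P) (y : Y) :
    0 < outDist W P y := by
  obtain ⟨x, hx⟩ := hP.exists_pos
  exact Finset.sum_pos' (fun x _ => mul_nonneg (hP.1 x) (hpos x y).le)
    ⟨x, Finset.mem_univ x, mul_pos hx (hpos x y)⟩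

variable [Fintype Y]

lemma isDist_outDist (hW : ∀ x y, 0 ≤ W x y) (hrow : ∀ x, ∑ y, W x y = 1) {P : X → ℝ}
    (hP : IsDist P) : IsDist (outDist W P) := by
  refine ⟨fun y => Finset.sum_nonneg fun x _ => mul_nonneg (hP.1 x) (hW x y), ?_⟩
  simp only [outDist]
  rw [Finset.sum_comm]
  simp [← Finset.mul_sum, hrow, hP.2]

lemma continuousOn_mutInfo (hpos : ∀ x y, 0 < W x y) :
    ContinuousOn (mutInfo W) (stdSimplex ℝ X) := by
  have h_out (y : Y) : Continuous fun P => outDist W P y := by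
    unfold outDist; fun_prop
  unfold mutInfo klDiv
  refine continuousOn_finsetSum _ fun x _ => (continuous_apply x).continuousOn.mul <|
    continuousOn_finsetSum _ fun y _ => continuousOn_const.mul ?_
  exact (continuousOn_const.div (h_out y).continuousOn fun P hP => (outDist_pos hpos hP y).ne').log
    fun P hP => (div_pos (hpos x y) (outDist_pos hpos hP y)).ne'

lemma exists_mutInfo_eq_capacity [Nonempty X] (hpos : ∀ x y, 0 < W x y) :
    ∃ P, IsDist P ∧ mutInfo W P = capacity W := by
  obtain ⟨P, hP, hmax⟩ := (isCompact_stdSimplex ℝ X).exists_isMaxOn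
    (nonempty_coe_sort.1 inferInstance) (continuousOn_mutInfo hpos)
  have h_greatest : IsGreatest {c | ∃ P : X → ℝ, IsDist P ∧ c = mutInfo W P} (mutInfo W P) :=
    ⟨⟨P, hP, rfl⟩, fun _ ⟨Q, hQ, hc⟩ => hc ▸ hmax hQ⟩
  exact ⟨P, hP, h_greatest.csSup_eq.symm⟩

lemma bddAbove_range_klDiv [Nonempty X] [Nonempty Y] (hpos : ∀ x y, 0 < W x y)
    (hrow : ∀ x, ∑ y, W x y = 1) :
    BddAbove (range fun i : {P // IsDist P} × X => klDiv (outDist W i.1.1) (W i.2)) := by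
  obtain ⟨⟨x₀, y₀⟩, hmin⟩ := Finite.exists_min fun p : X × Y => W p.1 p.2
  refine ⟨-Real.log (W x₀ y₀), ?_⟩
  rintro _ ⟨⟨P, x⟩, rfl⟩
  exact klDiv_le_neg_log (isDist_outDist (fun x y => (hpos x y).le) hrow P.2) (hpos x₀ y₀)
    fun y => hmin (x, y)

lemma Jfun_eq_timeSharingSup (W : X → Y → ℝ) :
    Jfun W = timeSharingSup (fun i : {P // IsDist P} × X => mutInfo W i.1.1)
      (fun i => klDiv (outDist W i.1.1) (W i.2)) := by
  funext R
  unfold Jfun timeSharingSup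
  congr 1
  ext u
  constructor
  · rintro ⟨t, x₁, x₂, P₁, P₂, ht0, ht1, hP₁, hP₂, hR, rfl⟩
    exact ⟨t, (⟨P₁, hP₁⟩, x₁), (⟨P₂, hP₂⟩, x₂), ht0, ht1, hR, rfl⟩
  · rintro ⟨t, ⟨⟨P₁, hP₁⟩, x₁⟩, ⟨⟨P₂, hP₂⟩, x₂⟩, ht0, ht1, hR, rfl⟩
    exact ⟨t, x₁, x₂, P₁, P₂, ht0, ht1, hP₁, hP₂, hR, rfl⟩

end Channel

/-- `J(R)` is concave and non-increasing on `(-∞, C]`. -/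
theorem Jfun_concaveOn_antitoneOn {X Y : Type*} [Fintype X] [Fintype Y]
    [Nonempty X] [Nonempty Y]
    (W : X → Y → ℝ) (hpos : ∀ x y, 0 < W x y) (hrow : ∀ x, ∑ y, W x y = 1) :
    ConcaveOn ℝ (Set.Iic (capacity W)) (Jfun W) ∧
    AntitoneOn (Jfun W) (Set.Iic (capacity W)) := by
  obtain ⟨P₀, hP₀, hcap⟩ := exists_mutInfo_eq_capacity hpos
  rw [Jfun_eq_timeSharingSup]
  exact timeSharingSup_concaveOn_antitoneOn (bddAbove_range_klDiv hpos hrow)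
    ⟨(⟨P₀, hP₀⟩, Classical.arbitrary X), hcap.ge⟩

end
end

section
/- Consider a variable-length block code over a DMC whose minimum transition probability is λ := min_{x,y} W(y|x) > 0, with message set M of size |M| ≥ 2, message uniformly distributed, decoding time τ satisfying P(τ < ∞) = 1, and decoded message M̂. Then the average error probability satisfies P_e ≥ ((|M|−1)/|M|) · E[(λ/(1−λ))^τ]. In particular P_e > 0. -/
/-!
Each output symbol has probability between `λ` and `1 - λ` under every input, so at a
decoding history of length `τ` the likelihood ratio of any two messages is at least
`(λ / (1 - λ)) ^ τ`. Hence every message keeps a share of at least `(λ / (1 - λ)) ^ τ / |M|`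
of the total likelihood, and whichever message is decoded, the `|M| - 1` others contribute
at least `((|M| - 1) / |M|) (λ / (1 - λ)) ^ τ` of it to the error probability.
-/

open scoped BigOperators

noncomputable section

/-- Likelihood of an output history (stored in reverse chronological order: head is the most
recent output) given the message `m`, for a variable-length feedback code with encoder
`enc` (mapping the message and the past outputs to the next channel input) over the
channel `W`. -/
def lik {X Y Msg : Type*} (W : X → Y → ℝ) (enc : Msg → List Y → X) (m : Msg) :
    List Y → ℝ
  | [] => 1
  | y :: ys => lik W enc m ys * W (enc m ys) y

section Channel

variable {X Y : Type*} [Fintype Y] {W : X → Y → ℝ}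

lemma add_le_one_of_ne (hW : ∀ x y, 0 ≤ W x y) (hrow : ∀ x, ∑ y, W x y = 1) (x : X)
    {y y' : Y} (hy : y ≠ y') : W x y + W x y' ≤ 1 := by
  classical
  rw [← hrow x, ← Finset.sum_pair hy]
  exact Finset.sum_le_sum_of_subset_of_nonneg (Finset.subset_univ _) fun z _ _ => hW x z

lemma div_one_sub_nonneg_of_minTransition {lam : ℝ} (hlam : 0 ≤ lam)
    (hW : ∀ x y, 0 ≤ W x y) (hmin : ∃ x y, W x y = lam) (hrow : ∀ x, ∑ y, W x y = 1) :
    0 ≤ lam / (1 - lam) := by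
  obtain ⟨x, y, rfl⟩ := hmin
  refine div_nonneg hlam (sub_nonneg.2 ?_)
  rw [← hrow x]
  exact Finset.single_le_sum (fun z _ => hW x z) (Finset.mem_univ y)

lemma div_one_sub_mul_le_of_minTransition {lam : ℝ} (hlam : 0 < lam)
    (hlow : ∀ x y, lam ≤ W x y) (hmin : ∃ x y, W x y = lam) (hrow : ∀ x, ∑ y, W x y = 1)
    (x : X) (y : Y) : lam / (1 - lam) * W x y ≤ lam := by
  have hW : ∀ x y, 0 ≤ W x y := fun x y => hlam.le.trans (hlow x y)
  by_cases hY : ∃ y', y' ≠ y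
  · obtain ⟨y', hy'⟩ := hY
    have hle : W x y ≤ 1 - lam := by
      linarith [add_le_one_of_ne hW hrow x hy'.symm, hlow x y']
    have hpos : 0 < 1 - lam := hlam.trans_le ((hlow x y).trans hle)
    calc lam / (1 - lam) * W x y ≤ lam / (1 - lam) * (1 - lam) := by gcongr
      _ = lam := div_mul_cancel₀ _ hpos.ne'
  · -- A one-letter output alphabet forces `lam = 1`, and then `lam / (1 - lam) = 0`.
    simp only [ne_eq, not_exists, not_not] at hY
    obtain ⟨x₀, y₀, h₀⟩ := hmin
    have hlam1 : lam = 1 := by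
      rw [← h₀, ← hrow x₀,
        Fintype.sum_eq_single y₀ fun z hz => absurd ((hY z).trans (hY y₀).symm) hz]
    simp [hlam1]

end Channel

section Likelihood

variable {X Y Msg : Type*} {W : X → Y → ℝ} {enc : Msg → List Y → X}

lemma lik_nonneg (hW : ∀ x y, 0 ≤ W x y) (m : Msg) : ∀ ys : List Y, 0 ≤ lik W enc m ys
  | [] => zero_le_one
  | _ :: ys => mul_nonneg (lik_nonneg hW m ys) (hW _ _)

lemma lik_pos (hW : ∀ x y, 0 < W x y) (m : Msg) : ∀ ys : List Y, 0 < lik W enc m ys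
  | [] => zero_lt_one
  | _ :: ys => mul_pos (lik_pos hW m ys) (hW _ _)

lemma pow_length_mul_lik_le {c : ℝ} (hW : ∀ x y, 0 ≤ W x y) (hc : 0 ≤ c)
    (hdom : ∀ x x' y, c * W x' y ≤ W x y) (m m' : Msg) :
    ∀ ys : List Y, c ^ ys.length * lik W enc m' ys ≤ lik W enc m ys
  | [] => by simp [lik]
  | y :: ys => by
    calc c ^ (y :: ys).length * lik W enc m' (y :: ys)
        = (c ^ ys.length * lik W enc m' ys) * (c * W (enc m' ys) y) := by
          rw [lik, List.length_cons, pow_succ]; ring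
      _ ≤ lik W enc m ys * W (enc m ys) y :=
          mul_le_mul (pow_length_mul_lik_le hW hc hdom m m' ys) (hdom _ _ _)
            (mul_nonneg hc (hW _ _)) (lik_nonneg hW m ys)

lemma pow_length_mul_lik_le_of_minTransition [Fintype Y] {lam : ℝ} (hlam : 0 < lam)
    (hlow : ∀ x y, lam ≤ W x y) (hmin : ∃ x y, W x y = lam) (hrow : ∀ x, ∑ y, W x y = 1)
    (m m' : Msg) (ys : List Y) :
    (lam / (1 - lam)) ^ ys.length * lik W enc m' ys ≤ lik W enc m ys :=
  have hW : ∀ x y, 0 ≤ W x y := fun x y => hlam.le.trans (hlow x y)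
  pow_length_mul_lik_le hW (div_one_sub_nonneg_of_minTransition hlam.le hW hmin hrow)
    (fun x x' y => (div_one_sub_mul_le_of_minTransition hlam hlow hmin hrow x' y).trans
      (hlow x y)) m m' ys

end Likelihood

lemma mul_tsum_le_tsum_of_le {α : Type*} {f h : α → ℝ} {a : ℝ} (ha : 0 ≤ a)
    (hh : ∀ i, 0 ≤ h i) (hle : ∀ i, a * h i ≤ f i) (hf : Summable f) :
    a * ∑' i, h i ≤ ∑' i, f i := by
  rw [← tsum_mul_left]
  exact (hf.of_nonneg_of_le (fun i => mul_nonneg ha (hh i)) hle).tsum_le_tsum hle hf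

section ErrorWeight

variable {ι : Type*} [Fintype ι] [DecidableEq ι]

lemma card_sub_one_div_mul_le_sum_ite_ne (p : ι → ℝ) {c : ℝ} (hp : ∀ i j, c * p j ≤ p i)
    (d : ι) :
    ((Fintype.card ι : ℝ) - 1) / Fintype.card ι *
        ((Fintype.card ι : ℝ)⁻¹ * (∑ i, p i) * c)
      ≤ (Fintype.card ι : ℝ)⁻¹ * ∑ i, if d = i then 0 else p i := by
  set N : ℝ := (Fintype.card ι : ℝ)
  have hN : 0 < N := Nat.cast_pos.2 (Fintype.card_pos_iff.2 ⟨d⟩)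
  have hsingle : ∀ i, c * ∑ j, p j ≤ N * p i := fun i => by
    rw [Finset.mul_sum]
    simpa using Finset.sum_le_sum fun j (_ : j ∈ Finset.univ) => hp i j
  have hsum : (N - 1) * (c * ∑ i, p i) ≤ N * ∑ i, if d = i then 0 else p i :=
    calc (N - 1) * (c * ∑ i, p i) = ∑ _i ∈ Finset.univ.erase d, c * ∑ j, p j := by
          rw [Finset.sum_const, Finset.card_erase_of_mem (Finset.mem_univ d), nsmul_eq_mul,
            Finset.card_univ, Nat.cast_pred (Fintype.card_pos_iff.2 ⟨d⟩)]
      _ ≤ ∑ i ∈ Finset.univ.erase d, N * p i := Finset.sum_le_sum fun i _ => hsingle i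
      _ = N * ∑ i, if d = i then 0 else p i := by
          rw [← Finset.mul_sum, Finset.sum_ite, Finset.sum_const_zero, zero_add,
            Finset.filter_ne]
  calc _ = (N⁻¹ * N⁻¹) * ((N - 1) * (c * ∑ i, p i)) := by field_simp
    _ ≤ (N⁻¹ * N⁻¹) * (N * ∑ i, if d = i then 0 else p i) :=
        mul_le_mul_of_nonneg_left hsum (by positivity)
    _ = _ := by field_simp

lemma sum_ite_ne_le_sum {p : ι → ℝ} (hp : ∀ i, 0 ≤ p i) (d : ι) :
    ∑ i, (if d = i then 0 else p i) ≤ ∑ i, p i :=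
  Finset.sum_le_sum fun i _ => by
    split_ifs
    exacts [hp i, le_rfl]

lemma sum_ite_ne_pos (hι : 2 ≤ Fintype.card ι) {p : ι → ℝ} (hp : ∀ i, 0 < p i) (d : ι) :
    0 < ∑ i, if d = i then 0 else p i := by
  obtain ⟨i, hi⟩ := Fintype.exists_ne_of_one_lt_card hι d
  refine Finset.sum_pos' (fun j _ => ?_) ⟨i, Finset.mem_univ i, by simp [hi.symm, hp i]⟩
  split_ifs
  exacts [le_rfl, (hp j).le]

end ErrorWeight

theorem err_ge_of_minTransition_general {X Y Msg : Type*} [Fintype Y] [Fintype Msg]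
    [DecidableEq Msg]
    (W : X → Y → ℝ) (lam : ℝ) (hlam : 0 < lam)
    (hlow : ∀ x y, lam ≤ W x y) (hmin : ∃ x y, W x y = lam)
    (hrow : ∀ x, ∑ y, W x y = 1)
    (enc : Msg → List Y → X) (S : Set (List Y)) (dec : List Y → Msg)
    (hM : 2 ≤ Fintype.card Msg)
    (hstop : ∑' ys : S, (Fintype.card Msg : ℝ)⁻¹ * ∑ m, lik W enc m (ys : List Y) = 1) :
    ((Fintype.card Msg : ℝ) - 1) / (Fintype.card Msg : ℝ) *
        ∑' ys : S, (Fintype.card Msg : ℝ)⁻¹ * (∑ m, lik W enc m (ys : List Y)) *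
          (lam / (1 - lam)) ^ (ys : List Y).length
      ≤ (∑' ys : S, (Fintype.card Msg : ℝ)⁻¹ *
          ∑ m, (if dec (ys : List Y) = m then 0 else lik W enc m (ys : List Y))) ∧
    0 < ∑' ys : S, (Fintype.card Msg : ℝ)⁻¹ *
          ∑ m, (if dec (ys : List Y) = m then 0 else lik W enc m (ys : List Y)) := by
  set N : ℝ := (Fintype.card Msg : ℝ)
  have hN : 2 ≤ N := by simp only [N]; exact_mod_cast hM
  have hWpos : ∀ x y, 0 < W x y := fun x y => hlam.trans_le (hlow x y)
  have hr : 0 ≤ lam / (1 - lam) :=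
    div_one_sub_nonneg_of_minTransition hlam.le (fun x y => (hWpos x y).le) hmin hrow
  have herr_pos : ∀ ys : S, 0 < N⁻¹ *
      ∑ m, (if dec (ys : List Y) = m then 0 else lik W enc m (ys : List Y)) :=
    fun ys => mul_pos (by positivity) (sum_ite_ne_pos hM (fun m => lik_pos hWpos m _) _)
  have hsum : Summable fun ys : S => N⁻¹ * ∑ m, lik W enc m (ys : List Y) := by
    by_contra h
    simp [tsum_eq_zero_of_not_summable h] at hstop
  have herr_sum := hsum.of_nonneg_of_le (fun ys => (herr_pos ys).le) fun ys =>
    mul_le_mul_of_nonneg_left (sum_ite_ne_le_sum (fun m => (lik_pos hWpos m _).le) _)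
      (by positivity)
  refine ⟨mul_tsum_le_tsum_of_le (div_nonneg (by linarith) (by positivity))
    (fun ys => ?_) (fun ys => ?_) herr_sum, ?_⟩
  · exact mul_nonneg (mul_nonneg (by positivity)
      (Finset.sum_nonneg fun m _ => (lik_pos hWpos m _).le)) (pow_nonneg hr _)
  · exact card_sub_one_div_mul_le_sum_ite_ne _
      (fun m m' => pow_length_mul_lik_le_of_minTransition hlam hlow hmin hrow m m' _) _
  · obtain ⟨ys⟩ : Nonempty S := by
      by_contra h
      simp [not_nonempty_iff.1 h] at hstop
    exact herr_sum.tsum_pos (fun ys => (herr_pos ys).le) ys (herr_pos ys)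

/-- Burnashev-type lower bound: for a variable-length block code on a DMC whose minimum
transition probability is `λ > 0`, with `|M| ≥ 2` messages (uniformly distributed),
decoding at the stopping histories `S` (an antichain, reached with probability one, i.e.
`P(τ < ∞) = 1`), the average error probability satisfies
`P_e ≥ ((|M|-1)/|M|) ⬝ E[(λ/(1-λ))^τ]`; in particular `P_e > 0`. -/
theorem err_ge_of_minTransition {X Y Msg : Type*} [Fintype X] [Fintype Y] [Fintype Msg]
    [DecidableEq Msg]
    (W : X → Y → ℝ) (lam : ℝ) (hlam : 0 < lam)
    (hlow : ∀ x y, lam ≤ W x y) (hmin : ∃ x y, W x y = lam)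
    (hrow : ∀ x, ∑ y, W x y = 1)
    (enc : Msg → List Y → X) (S : Set (List Y)) (dec : List Y → Msg)
    (hM : 2 ≤ Fintype.card Msg)
    (hanti : ∀ ys ∈ S, ∀ zs ∈ S, ys <:+ zs → ys = zs)
    (hstop : ∑' ys : S, (Fintype.card Msg : ℝ)⁻¹ * ∑ m, lik W enc m (ys : List Y) = 1) :
    ((Fintype.card Msg : ℝ) - 1) / (Fintype.card Msg : ℝ) *
        ∑' ys : S, (Fintype.card Msg : ℝ)⁻¹ * (∑ m, lik W enc m (ys : List Y)) *
          (lam / (1 - lam)) ^ (ys : List Y).length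
      ≤ (∑' ys : S, (Fintype.card Msg : ℝ)⁻¹ *
          ∑ m, (if dec (ys : List Y) = m then 0 else lik W enc m (ys : List Y))) ∧
    0 < ∑' ys : S, (Fintype.card Msg : ℝ)⁻¹ *
          ∑ m, (if dec (ys : List Y) = m then 0 else lik W enc m (ys : List Y)) :=
  err_ge_of_minTransition_general W lam hlam hlow hmin hrow enc S dec hM hstop

end
end

section
/- Consider a variable-length block code with P(τ < ∞) = 1 on a DMC with minimum transition probability λ > 0, with average error probability P_e and message set M satisfying P_e + 1/|M| < 1. Then the minimum over messages m of the conditional error probability P(M̂ ≠ m | M = m) is strictly positive; specifically, letting n* := min{n : max_m P(τ > n | M = m) ≤ (|M|−1)/|M| − P_e} (which is finite), one has min_m P(M̂ ≠ m | M = m) ≥ (λ/(1−λ))^{n*} · (1 − 1/|M| − P_e). -/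
open scoped BigOperators

noncomputable section

/-!
Since every transition probability lies in `[λ, 1 - λ]`, changing the message multiplies the
likelihood of an output history of length `k` by at least `r ^ k`, where `r = λ / (1 - λ)`.
Let `n*` be the first time by which, for every message, the decoder has stopped except with
probability at most `1 - 1/|M| - P_e`. Then each message `m' ≠ m` is decoded correctly by time
`n*` with probability at least `1/|M| + P_e - P(M̂ ≠ m' | M = m')`; these events are disjoint
and, under `M = m`, are errors of probability at least `r ^ n*` times theirs. Summing over
`m' ≠ m` gives `P(M̂ ≠ m | M = m) ≥ r ^ n* (1 - 1/|M| - P_e)`.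
-/

open Filter Topology Finset

namespace FeedbackCode

section Tsum

variable {ι : Type*} {f : ι → ℝ}

lemma summable_ite (hf : Summable f) (P : ι → Prop) [DecidablePred P] :
    Summable fun i => if P i then f i else 0 :=
  (hf.indicator {i | P i}).congr fun i => by by_cases h : P i <;> simp [h]

lemma summable_ite_zero (hf : Summable f) (P : ι → Prop) [DecidablePred P] :
    Summable fun i => if P i then 0 else f i := by
  simpa only [ite_not] using summable_ite hf fun i => ¬P i

lemma tsum_ite_add_tsum_ite_le (hf : Summable f) (hf0 : ∀ i, 0 ≤ f i) (P Q : ι → Prop)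
    [DecidablePred P] [DecidablePred Q] :
    ((∑' i, if P i then f i else 0) + ∑' i, if Q i then f i else 0) ≤
      (∑' i, if P i ∧ Q i then f i else 0) + ∑' i, f i := by
  have hs := summable_ite hf
  rw [← (hs P).tsum_add (hs Q), ← (hs _).tsum_add hf]
  refine ((hs P).add (hs Q)).tsum_le_tsum (fun i => ?_) ((hs _).add hf)
  by_cases hP : P i <;> by_cases hQ : Q i <;> simp [hP, hQ, hf0]

lemma tendsto_tsum_ite_le_atTop (hf : Summable f) (ℓ : ι → ℕ) :
    Tendsto (fun n => ∑' i, if ℓ i ≤ n then f i else 0) atTop (𝓝 (∑' i, f i)) := by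
  refine tendsto_tsum_of_dominated_convergence hf.abs (fun i => ?_)
    (Eventually.of_forall fun n i => by split_ifs <;> simp)
  exact tendsto_const_nhds.congr' (eventually_atTop.2 ⟨ℓ i, fun n hn => (if_pos hn).symm⟩)

end Tsum

section Code

variable {ι Msg : Type*}

/-- `P(M̂ ≠ m | M = m)` when `p m` is the law of the stopped output under message `m`. -/
def errorProb [DecidableEq Msg] (p : Msg → ι → ℝ) (d : ι → Msg) (m : Msg) : ℝ :=
  ∑' i, if d i = m then 0 else p m i

def avgErrorProb [Fintype Msg] [DecidableEq Msg] (p : Msg → ι → ℝ) (d : ι → Msg) : ℝ :=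
  ∑' i, (Fintype.card Msg : ℝ)⁻¹ * ∑ m, if d i = m then 0 else p m i

/-- `P(τ > n | M = m)`, where `ℓ` reads off the stopping time. -/
def tailProb (p : Msg → ι → ℝ) (ℓ : ι → ℕ) (m : Msg) (n : ℕ) : ℝ :=
  1 - ∑' i, if ℓ i ≤ n then p m i else 0

variable {p : Msg → ι → ℝ} (d : ι → Msg) (ℓ : ι → ℕ)

lemma avgErrorProb_eq [Fintype Msg] [DecidableEq Msg] (hp : ∀ m, Summable (p m)) :
    avgErrorProb p d = (Fintype.card Msg : ℝ)⁻¹ * ∑ m, errorProb p d m := by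
  rw [avgErrorProb, tsum_mul_left,
    Summable.tsum_finsetSum fun m _ => summable_ite_zero (hp m) fun i => d i = m]
  rfl

lemma tendsto_tailProb {m : Msg} (hp1 : HasSum (p m) 1) :
    Tendsto (tailProb p ℓ m) atTop (𝓝 0) := by
  have h := (tendsto_tsum_ite_le_atTop hp1.summable ℓ).const_sub 1
  rwa [hp1.tsum_eq, sub_self] at h

lemma one_sub_errorProb_sub_tailProb_le [DecidableEq Msg] {m : Msg} (hp0 : ∀ i, 0 ≤ p m i)
    (hp1 : HasSum (p m) 1) (n : ℕ) :
    1 - errorProb p d m - tailProb p ℓ m n ≤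
      ∑' i, if ℓ i ≤ n ∧ d i = m then p m i else 0 := by
  have hcorrect : (∑' i, if d i = m then p m i else 0) = 1 - errorProb p d m := by
    rw [eq_sub_iff_add_eq, errorProb, ← (summable_ite hp1.summable _).tsum_add
      (summable_ite_zero hp1.summable _), ← hp1.tsum_eq]
    exact tsum_congr fun i => by split_ifs <;> simp
  have h := tsum_ite_add_tsum_ite_le hp1.summable hp0 (fun i => ℓ i ≤ n) (fun i => d i = m)
  rw [hcorrect, hp1.tsum_eq] at h
  rw [tailProb]
  linarith

variable {r : ℝ}

/-- Change of measure: each output decoded as `m' ≠ m` by time `n` is, under `m`, an error. -/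
lemma pow_mul_sum_le_errorProb [Fintype Msg] [DecidableEq Msg] (hr0 : 0 ≤ r) (hr1 : r ≤ 1)
    (hp0 : ∀ m i, 0 ≤ p m i) (hp : ∀ m, Summable (p m))
    (hchg : ∀ m m' i, r ^ ℓ i * p m' i ≤ p m i) (n : ℕ) (m : Msg) :
    r ^ n * ∑ m' ∈ univ.erase m, (∑' i, if ℓ i ≤ n ∧ d i = m' then p m' i else 0) ≤
      errorProb p d m := by
  have hs m' := summable_ite (hp m') fun i => ℓ i ≤ n ∧ d i = m'
  rw [← Summable.tsum_finsetSum fun m' _ => hs m', ← tsum_mul_left]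
  refine ((summable_sum fun m' _ => hs m').mul_left _).tsum_le_tsum (fun i => ?_)
    (summable_ite_zero (hp m) _)
  by_cases hdm : d i = m
  · rw [if_pos hdm, sum_eq_zero fun m' hm' => if_neg fun h => (ne_of_mem_erase hm') (h.2 ▸ hdm)]
    simp
  rw [if_neg hdm, sum_eq_single_of_mem (d i) (mem_erase.2 ⟨hdm, mem_univ _⟩)
    fun m' _ hm' => if_neg fun h => hm' h.2.symm]
  by_cases hℓ : ℓ i ≤ n
  · rw [if_pos ⟨hℓ, rfl⟩]
    calc r ^ n * p (d i) i ≤ r ^ ℓ i * p (d i) i :=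
          mul_le_mul_of_nonneg_right (pow_le_pow_of_le_one hr0 hr1 hℓ) (hp0 _ _)
      _ ≤ p m i := hchg _ _ _
  · rw [if_neg fun h => hℓ h.1, mul_zero]
    exact hp0 m i

lemma pow_mul_le_errorProb [Fintype Msg] [DecidableEq Msg] (hr0 : 0 ≤ r) (hr1 : r ≤ 1)
    (hp0 : ∀ m i, 0 ≤ p m i) (hp1 : ∀ m, HasSum (p m) 1)
    (hchg : ∀ m m' i, r ^ ℓ i * p m' i ≤ p m i) {n : ℕ}
    (htail : ∀ m, tailProb p ℓ m n ≤ 1 - (Fintype.card Msg : ℝ)⁻¹ - avgErrorProb p d)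
    (m : Msg) :
    r ^ n * (1 - (Fintype.card Msg : ℝ)⁻¹ - avgErrorProb p d) ≤ errorProb p d m := by
  have : Nonempty Msg := ⟨m⟩
  set K : ℝ := (Fintype.card Msg : ℝ)
  have hK : K ≠ 0 := Nat.cast_ne_zero.2 Fintype.card_ne_zero
  have hPe : ∑ m', errorProb p d m' = K * avgErrorProb p d := by
    rw [avgErrorProb_eq d fun m => (hp1 m).summable, mul_inv_cancel_left₀ hK]
  set Pe := avgErrorProb p d
  have hcard : ((univ.erase m).card : ℝ) = K - 1 := by
    rw [card_erase_of_mem (mem_univ m), card_univ, Nat.cast_pred Fintype.card_pos]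
  have hcorrect : ∑ m' ∈ univ.erase m, (1 - errorProb p d m' - tailProb p ℓ m' n) ≤
      ∑ m' ∈ univ.erase m, ∑' i, if ℓ i ≤ n ∧ d i = m' then p m' i else 0 :=
    sum_le_sum fun m' _ => one_sub_errorProb_sub_tailProb_le d ℓ (hp0 m') (hp1 m') n
  have hlow : ∑ m' ∈ univ.erase m, (K⁻¹ + Pe - errorProb p d m') ≤
      ∑ m' ∈ univ.erase m, (1 - errorProb p d m' - tailProb p ℓ m' n) :=
    sum_le_sum fun m' _ => by linarith [htail m']
  rw [sum_sub_distrib, sum_const, nsmul_eq_mul, hcard, sum_erase_eq_sub (mem_univ m), hPe]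
    at hlow
  have hid : (K - 1) * (K⁻¹ + Pe) - (K * Pe - errorProb p d m) =
      1 - K⁻¹ - Pe + errorProb p d m := by
    field_simp; ring
  have hPem : 0 ≤ errorProb p d m := tsum_nonneg fun i => by split_ifs <;> simp [hp0]
  have hkey : 1 - K⁻¹ - Pe ≤
      ∑ m' ∈ univ.erase m, ∑' i, if ℓ i ≤ n ∧ d i = m' then p m' i else 0 := by
    linarith
  exact (mul_le_mul_of_nonneg_left hkey (pow_nonneg hr0 n)).trans
    (pow_mul_sum_le_errorProb d ℓ hr0 hr1 hp0 (fun m => (hp1 m).summable) hchg n m)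

end Code

section Channel

variable {X Y Msg : Type*} {W : X → Y → ℝ} {lam r : ℝ}

lemma lik_nonneg (hW0 : ∀ x y, 0 ≤ W x y) (enc : Msg → List Y → X) (m : Msg) :
    ∀ ys : List Y, 0 ≤ lik W enc m ys
  | [] => zero_le_one
  | _ :: ys => mul_nonneg (lik_nonneg hW0 enc m ys) (hW0 _ _)

lemma pow_length_mul_lik_le (hr0 : 0 ≤ r) (hW0 : ∀ x y, 0 ≤ W x y)
    (hW : ∀ x x' y, r * W x y ≤ W x' y) (enc : Msg → List Y → X) (m m' : Msg) :
    ∀ ys : List Y, r ^ ys.length * lik W enc m ys ≤ lik W enc m' ys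
  | [] => by simp [lik]
  | y :: ys =>
    calc r ^ (y :: ys).length * lik W enc m (y :: ys)
        = (r ^ ys.length * lik W enc m ys) * (r * W (enc m ys) y) := by
          simp only [lik, List.length_cons, pow_succ]; ring
      _ ≤ lik W enc m' ys * W (enc m' ys) y :=
        mul_le_mul (pow_length_mul_lik_le hr0 hW0 hW enc m m' ys) (hW _ _ _)
          (mul_nonneg hr0 (hW0 _ _)) (lik_nonneg hW0 enc m' ys)

variable [Fintype Y]

lemma lam_le_one (hlam : 0 ≤ lam) (hlow : ∀ x y, lam ≤ W x y) (hrow : ∀ x, ∑ y, W x y = 1)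
    (hmin : ∃ x y, W x y = lam) : lam ≤ 1 := by
  obtain ⟨x, y, rfl⟩ := hmin
  exact (single_le_sum (fun y _ => hlam.trans (hlow x y)) (mem_univ y)).trans_eq (hrow x)

/-- If `λ < 1` is attained, there is a second output letter, and it has probability `≥ λ`. -/
lemma le_one_sub_of_lt_one (hlam : 0 ≤ lam) (hlow : ∀ x y, lam ≤ W x y)
    (hrow : ∀ x, ∑ y, W x y = 1) (hmin : ∃ x y, W x y = lam) (hlt : lam < 1) (x : X) (y : Y) :
    W x y ≤ 1 - lam := by
  obtain ⟨y', hy'⟩ : ∃ y', y' ≠ y := by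
    by_contra! h
    have : Subsingleton Y := ⟨fun a b => (h a).trans (h b).symm⟩
    obtain ⟨x₀, y₀, h₀⟩ := hmin
    have h1 := hrow x₀
    rw [Fintype.sum_subsingleton _ y₀, h₀] at h1
    exact hlt.ne h1
  have h2 := add_le_sum (fun i _ => hlam.trans (hlow x i)) (mem_univ y) (mem_univ y') hy'.symm
  linarith [hrow x, hlow x y']

lemma div_one_sub_le_one (hlam : 0 ≤ lam) (hlow : ∀ x y, lam ≤ W x y)
    (hrow : ∀ x, ∑ y, W x y = 1) (hmin : ∃ x y, W x y = lam) : lam / (1 - lam) ≤ 1 := by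
  rcases (lam_le_one hlam hlow hrow hmin).eq_or_lt with h | h
  · simp [h]
  obtain ⟨x₀, y₀, h₀⟩ := hmin
  have := le_one_sub_of_lt_one hlam hlow hrow ⟨x₀, y₀, h₀⟩ h x₀ y₀
  rw [div_le_one (by linarith)]
  linarith

/-- The junk value `λ / 0 = 0` makes this hold also for the noiseless channel `λ = 1`. -/
lemma div_one_sub_mul_le (hlam : 0 ≤ lam) (hlow : ∀ x y, lam ≤ W x y)
    (hrow : ∀ x, ∑ y, W x y = 1) (hmin : ∃ x y, W x y = lam) (x x' : X) (y : Y) :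
    lam / (1 - lam) * W x y ≤ W x' y := by
  rcases (lam_le_one hlam hlow hrow hmin).eq_or_lt with h | h
  · simpa [h] using hlam.trans (hlow x' y)
  calc lam / (1 - lam) * W x y ≤ lam / (1 - lam) * (1 - lam) :=
        mul_le_mul_of_nonneg_left (le_one_sub_of_lt_one hlam hlow hrow hmin h x y)
          (div_nonneg hlam (by linarith))
    _ = lam := div_mul_cancel₀ _ (by linarith)
    _ ≤ W x' y := hlow x' y

end Channel

end FeedbackCode

open FeedbackCode

theorem min_conditional_error_pos_general {X Y Msg : Type*} [Fintype Y] [Fintype Msg]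
    [DecidableEq Msg]
    (W : X → Y → ℝ) (lam : ℝ) (hlam : 0 < lam)
    (hlow : ∀ x y, lam ≤ W x y) (hmin : ∃ x y, W x y = lam)
    (hrow : ∀ x, ∑ y, W x y = 1)
    (enc : Msg → List Y → X) (S : Set (List Y)) (dec : List Y → Msg)
    (hstopm : ∀ m : Msg, ∑' ys : S, lik W enc m (ys : List Y) = 1) :
    let Pe : ℝ := ∑' ys : S, (Fintype.card Msg : ℝ)⁻¹ *
        ∑ m, (if dec (ys : List Y) = m then 0 else lik W enc m (ys : List Y))
    let Pem : Msg → ℝ := fun m => ∑' ys : S,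
        (if dec (ys : List Y) = m then 0 else lik W enc m (ys : List Y))
    let Ptail : Msg → ℕ → ℝ := fun m n => 1 - ∑' ys : S,
        (if (ys : List Y).length ≤ n then lik W enc m (ys : List Y) else 0)
    Pe + (Fintype.card Msg : ℝ)⁻¹ < 1 →
      ∃ nstar : ℕ,
        IsLeast {n : ℕ | ∀ m : Msg,
            Ptail m n ≤ ((Fintype.card Msg : ℝ) - 1) / (Fintype.card Msg : ℝ) - Pe} nstar ∧
        ∀ m : Msg,
          (lam / (1 - lam)) ^ nstar * (1 - (Fintype.card Msg : ℝ)⁻¹ - Pe) ≤ Pem m := by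
  intro Pe Pem Ptail hlt
  have hW0 x y : 0 ≤ W x y := hlam.le.trans (hlow x y)
  have hr0 : 0 ≤ lam / (1 - lam) :=
    div_nonneg hlam.le (sub_nonneg.2 (lam_le_one hlam.le hlow hrow hmin))
  have hp1 (m : Msg) : HasSum (fun ys : S => lik W enc m ys) 1 := by
    refine hstopm m ▸ Summable.hasSum ?_
    by_contra h
    exact zero_ne_one ((tsum_eq_zero_of_not_summable h).symm.trans (hstopm m))
  have hthr (m : Msg) : ((Fintype.card Msg : ℝ) - 1) / Fintype.card Msg - Pe =
      1 - (Fintype.card Msg : ℝ)⁻¹ - Pe := by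
    have : Nonempty Msg := ⟨m⟩
    field_simp
  have hex : ∃ n, ∀ m, Ptail m n ≤ ((Fintype.card Msg : ℝ) - 1) / Fintype.card Msg - Pe :=
    (eventually_all.2 fun m => (tendsto_tailProb (p := fun m (ys : S) => lik W enc m ys)
      (fun ys : S => (ys : List Y).length) (hp1 m)).eventually
      (eventually_le_nhds (by rw [hthr m]; linarith))).exists
  refine ⟨Nat.find hex, Nat.isLeast_find hex, fun m => ?_⟩
  exact pow_mul_le_errorProb (fun ys : S => dec ys) (fun ys : S => (ys : List Y).length) hr0
    (div_one_sub_le_one hlam.le hlow hrow hmin) (fun m ys => lik_nonneg hW0 enc m ys) hp1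
    (fun m m' ys => pow_length_mul_lik_le hr0 hW0 (div_one_sub_mul_le hlam.le hlow hrow hmin)
      enc m' m ys)
    (fun m' => hthr m ▸ Nat.find_spec hex m') m

/-- If `P_e + 1/|M| < 1`, the minimum conditional error probability is strictly positive:
letting `n*` be the least `n` such that `P(τ > n | M = m) ≤ (|M|-1)/|M| - P_e` for every
message `m` (such an `n` exists, i.e. `n*` is finite), every message `m` satisfies
`P(M̂ ≠ m | M = m) ≥ (λ/(1-λ))^{n*} ⬝ (1 - 1/|M| - P_e)`. -/
theorem min_conditional_error_pos {X Y Msg : Type*} [Fintype X] [Fintype Y] [Fintype Msg]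
    [DecidableEq Msg]
    (W : X → Y → ℝ) (lam : ℝ) (hlam : 0 < lam)
    (hlow : ∀ x y, lam ≤ W x y) (hmin : ∃ x y, W x y = lam)
    (hrow : ∀ x, ∑ y, W x y = 1)
    (enc : Msg → List Y → X) (S : Set (List Y)) (dec : List Y → Msg)
    (hanti : ∀ ys ∈ S, ∀ zs ∈ S, ys <:+ zs → ys = zs)
    (hstopm : ∀ m : Msg, ∑' ys : S, lik W enc m (ys : List Y) = 1) :
    let Pe : ℝ := ∑' ys : S, (Fintype.card Msg : ℝ)⁻¹ *
        ∑ m, (if dec (ys : List Y) = m then 0 else lik W enc m (ys : List Y))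
    let Pem : Msg → ℝ := fun m => ∑' ys : S,
        (if dec (ys : List Y) = m then 0 else lik W enc m (ys : List Y))
    let Ptail : Msg → ℕ → ℝ := fun m n => 1 - ∑' ys : S,
        (if (ys : List Y).length ≤ n then lik W enc m (ys : List Y) else 0)
    Pe + (Fintype.card Msg : ℝ)⁻¹ < 1 →
      ∃ nstar : ℕ,
        IsLeast {n : ℕ | ∀ m : Msg,
            Ptail m n ≤ ((Fintype.card Msg : ℝ) - 1) / (Fintype.card Msg : ℝ) - Pe} nstar ∧
        ∀ m : Msg,
          (lam / (1 - lam)) ^ nstar * (1 - (Fintype.card Msg : ℝ)⁻¹ - Pe) ≤ Pem m :=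
  min_conditional_error_pos_general W lam hlam hlow hmin hrow enc S dec hstopm

end
end

section
/- (Fano-type bound with list-size control) Let M be uniform on M = M₁ × ⋯ × M_ℓ and let L(Y) ⊆ M be a random subset such that the complement of L(Y) has at most |M|/|M^i| elements, where |M^i| = |M₁|⋯|M_i|. Then H(M|Y) ≤ h(P(M ∈ L(Y) | Y)) + ln(|M|/|M^i|) + P(M ∈ L(Y)|Y) · ln|M^i|. -/
open scoped BigOperators

noncomputable section

/-- The binary entropy function `h(s) = -s ln s - (1-s) ln(1-s)`. -/
def bent (s : ℝ) : ℝ := -(s * Real.log s) - (1 - s) * Real.log (1 - s)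

/-!
Split the entropy into the part carried by the list `L` and the part carried by its complement.
Grouping each part (Jensen for the concave `x ↦ -x log x` with uniform weights) bounds it by the
entropy of its total mass plus that mass times the log of the number of atoms. With `q = p(L)`,
`|L| ≤ |M| = R·P` and `|Lᶜ| ≤ R`, where `R = |M|/|M^i|` and `P = |M^i|`, this gives
`H(p) ≤ h(q) + q (ln R + ln P) + (1 - q) ln R = h(q) + ln R + q ln P`.
-/

open Real Finset

lemma bent_eq_negMulLog_add_negMulLog_one_sub (s : ℝ) :
    bent s = negMulLog s + negMulLog (1 - s) := by
  simp only [bent, negMulLog]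
  ring

lemma sum_negMulLog_le_negMulLog_sum_add_mul_log_card {α : Type*} (S : Finset α) {p : α → ℝ}
    (hp : ∀ m ∈ S, 0 ≤ p m) :
    ∑ m ∈ S, negMulLog (p m) ≤ negMulLog (∑ m ∈ S, p m) + (∑ m ∈ S, p m) * log S.card := by
  rcases S.eq_empty_or_nonempty with rfl | hS
  · simp
  have hn : (0 : ℝ) < S.card := by exact_mod_cast hS.card_pos
  have jensen : ∑ m ∈ S, (S.card : ℝ)⁻¹ * negMulLog (p m)
      ≤ negMulLog (∑ m ∈ S, (S.card : ℝ)⁻¹ * p m) :=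
    concaveOn_negMulLog.le_map_sum (fun _ _ => by positivity)
      (by rw [sum_const, nsmul_eq_mul, mul_inv_cancel₀ hn.ne']) hp
  have scaling : ∀ s : ℝ, negMulLog ((S.card : ℝ)⁻¹ * s)
      = (S.card : ℝ)⁻¹ * (negMulLog s + s * log S.card) := fun s => by
    rw [mul_comm, negMulLog_mul, negMulLog, negMulLog, log_inv]
    ring
  rw [← mul_sum, ← mul_sum, scaling] at jensen
  exact le_of_mul_le_mul_left jensen (inv_pos.mpr hn)

lemma sum_negMulLog_le_negMulLog_sum_add_mul_log {α : Type*} (S : Finset α) {p : α → ℝ}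
    (hp : ∀ m ∈ S, 0 ≤ p m) {N : ℝ} (hN : (S.card : ℝ) ≤ N) :
    ∑ m ∈ S, negMulLog (p m) ≤ negMulLog (∑ m ∈ S, p m) + (∑ m ∈ S, p m) * log N := by
  rcases S.eq_empty_or_nonempty with rfl | hS
  · simp
  refine (sum_negMulLog_le_negMulLog_sum_add_mul_log_card S hp).trans ?_
  gcongr
  exact sum_nonneg hp

theorem sum_negMulLog_le_bent_add_of_card_compl_le {α : Type*} [Fintype α] [DecidableEq α]
    {p : α → ℝ} (hp0 : ∀ m, 0 ≤ p m) (hp1 : ∑ m, p m = 1) (L : Finset α) {R P : ℝ}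
    (hR : 0 < R) (hP : 0 < P) (hcard : (Fintype.card α : ℝ) ≤ R * P) (hL : (Lᶜ.card : ℝ) ≤ R) :
    ∑ m, negMulLog (p m) ≤ bent (∑ m ∈ L, p m) + log R + (∑ m ∈ L, p m) * log P := by
  have hLcard : (L.card : ℝ) ≤ R * P :=
    le_trans (by exact_mod_cast L.card_le_univ) hcard
  have hmassL := sum_negMulLog_le_negMulLog_sum_add_mul_log L (fun m _ => hp0 m) hLcard
  have hmassLc := sum_negMulLog_le_negMulLog_sum_add_mul_log Lᶜ (fun m _ => hp0 m) hL
  have hcompl : ∑ m ∈ Lᶜ, p m = 1 - ∑ m ∈ L, p m := by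
    rw [← hp1, ← sum_add_sum_compl L p, add_sub_cancel_left]
  rw [hcompl] at hmassLc
  rw [log_mul hR.ne' hP.ne'] at hmassL
  rw [← sum_add_sum_compl L, bent_eq_negMulLog_add_negMulLog_one_sub]
  linear_combination hmassL + hmassLc

/-- Fano-type bound with list-size control: for a (posterior) distribution `p` on a finite
product message set `M = M₁ × ⋯ × M_ℓ` and a list `L ⊆ M` whose complement has at most
`|M|/|M^i|` elements (`|M^i| = |M₁| ⋯ |M_i|`), the entropy satisfies
`H(p) ≤ h(p(L)) + ln(|M|/|M^i|) + p(L) ln |M^i|`. Applied pointwise in the observation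
`Y`, this gives the bound on the conditional entropy `H(M|Y)`. -/
theorem fano_with_list_size {ℓ : ℕ} {Mi : Fin ℓ → Type*}
    [∀ j, Fintype (Mi j)] [∀ j, DecidableEq (Mi j)]
    (p : ((j : Fin ℓ) → Mi j) → ℝ)
    (hp : (∀ m, 0 ≤ p m) ∧ ∑ m, p m = 1)
    (i : ℕ) (L : Finset ((j : Fin ℓ) → Mi j))
    (hL : (Lᶜ.card : ℝ) ≤ (Fintype.card ((j : Fin ℓ) → Mi j) : ℝ) /
        ∏ j ∈ Finset.univ.filter (fun j : Fin ℓ => (j : ℕ) < i), (Fintype.card (Mi j) : ℝ)) :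
    ∑ m, p m * Real.log (1 / p m)
      ≤ bent (∑ m ∈ L, p m)
        + Real.log ((Fintype.card ((j : Fin ℓ) → Mi j) : ℝ) /
            ∏ j ∈ Finset.univ.filter (fun j : Fin ℓ => (j : ℕ) < i), (Fintype.card (Mi j) : ℝ))
        + (∑ m ∈ L, p m) *
            Real.log (∏ j ∈ Finset.univ.filter (fun j : Fin ℓ => (j : ℕ) < i),
              (Fintype.card (Mi j) : ℝ)) := by
  obtain ⟨hp0, hp1⟩ := hp
  have hM : Nonempty ((j : Fin ℓ) → Mi j) := by
    by_contra h
    rw [not_nonempty_iff] at h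
    simp at hp1
  have hMcard : (0 : ℝ) < Fintype.card ((j : Fin ℓ) → Mi j) := by exact_mod_cast Fintype.card_pos
  have hP : (0 : ℝ) < ∏ j ∈ univ.filter (fun j : Fin ℓ => (j : ℕ) < i), (Fintype.card (Mi j) : ℝ) :=
    prod_pos fun j _ => by
      have : Nonempty (Mi j) := hM.map (fun m => m j)
      exact_mod_cast Fintype.card_pos
  have hent : ∑ m, p m * log (1 / p m) = ∑ m, negMulLog (p m) :=
    sum_congr rfl fun m _ => by rw [one_div, log_inv, negMulLog]; ring
  rw [hent]
  exact sum_negMulLog_le_bent_add_of_card_compl_le hp0 hp1 L (div_pos hMcard hP) hP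
    (div_mul_cancel₀ _ hP.ne').ge hL

end
end

section
/- (Concavity of the missed-detection exponent) Define E_md(R, E) := E + (1 − E/D)·J(R/(1 − E/D)) on the region {(R,E) : 0 ≤ R ≤ C, 0 ≤ E ≤ (1 − R/C)·D}, with the convention E_md(0, D) = D. Then E_md is jointly concave on this region. -/
/-! With `t = 1 - E / D`, the exponent is `E_md(R, E) = E + t * J (R / t)`: a linear term plus the
perspective `(x, t) ↦ t * J (x / t)` of `J` composed with an affine change of coordinates. The
perspective of a concave function is concave on the cone `{(x, t) | t ≥ 0, x ∈ t • s}` over its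
domain `s`, because `u * f y₁ + v * f y₂ ≤ (u + v) * f ((u • y₁ + v • y₂) / (u + v))` is concavity of
`f` with weights `u / (u + v)`, `v / (u + v)`. The apex `t = 0` of the cone is the point
`(R, E) = (0, D)`, where the perspective vanishes, matching the convention `E_md(0, D) = D`. -/

open Set Pointwise

noncomputable section

section Perspective

variable {E : Type*} [AddCommGroup E] [Module ℝ E]

def perspectiveCone (s : Set E) : Set (E × ℝ) := {p | 0 ≤ p.2 ∧ p.1 ∈ p.2 • s}

/-- At `t = 0` this is `0`, through `0⁻¹ = 0`. -/
def perspective (f : E → ℝ) (p : E × ℝ) : ℝ := p.2 * f (p.2⁻¹ • p.1)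

theorem perspective_smul_mk (f : E → ℝ) (t : ℝ) (y : E) :
    perspective f (t • y, t) = t * f y := by
  rcases eq_or_ne t 0 with rfl | ht
  · simp [perspective]
  · simp [perspective, smul_smul, ht]

theorem Convex.perspectiveCone {s : Set E} (hs : Convex ℝ s) :
    Convex ℝ (perspectiveCone s) := by
  rintro ⟨x₁, t₁⟩ ⟨ht₁, hx₁⟩ ⟨x₂, t₂⟩ ⟨ht₂, hx₂⟩ a b ha hb -
  obtain ⟨y₁, hy₁, rfl⟩ : ∃ y ∈ s, t₁ • y = x₁ := hx₁
  obtain ⟨y₂, hy₂, rfl⟩ : ∃ y ∈ s, t₂ • y = x₂ := hx₂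
  refine ⟨by simp only [Prod.snd_add, Prod.smul_snd, smul_eq_mul]; positivity, ?_⟩
  simp only [Prod.fst_add, Prod.snd_add, Prod.smul_fst, Prod.smul_snd, smul_eq_mul, smul_smul]
  rw [hs.add_smul (mul_nonneg ha ht₁) (mul_nonneg hb ht₂)]
  exact add_mem_add (smul_mem_smul_set hy₁) (smul_mem_smul_set hy₂)

theorem ConcaveOn.mul_add_mul_le_perspective {s : Set E} {f : E → ℝ} (hf : ConcaveOn ℝ s f)
    {u v : ℝ} (hu : 0 ≤ u) (hv : 0 ≤ v) {y₁ y₂ : E} (hy₁ : y₁ ∈ s) (hy₂ : y₂ ∈ s) :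
    u * f y₁ + v * f y₂ ≤ perspective f (u • y₁ + v • y₂, u + v) := by
  rcases (add_nonneg hu hv).eq_or_lt with hT | hT
  · obtain ⟨rfl, rfl⟩ : u = 0 ∧ v = 0 := ⟨by linarith, by linarith⟩
    simp [perspective]
  have hweights : u / (u + v) + v / (u + v) = 1 := by rw [← add_div, div_self hT.ne']
  have hconc := hf.2 hy₁ hy₂ (div_nonneg hu hT.le) (div_nonneg hv hT.le) hweights
  have harg : (u + v)⁻¹ • (u • y₁ + v • y₂) = (u / (u + v)) • y₁ + (v / (u + v)) • y₂ := by
    simp only [smul_add, smul_smul, div_eq_inv_mul]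
  calc u * f y₁ + v * f y₂ = (u + v) * ((u / (u + v)) • f y₁ + (v / (u + v)) • f y₂) := by
        simp only [smul_eq_mul]; field_simp
    _ ≤ (u + v) * f ((u / (u + v)) • y₁ + (v / (u + v)) • y₂) :=
        mul_le_mul_of_nonneg_left hconc hT.le
    _ = perspective f (u • y₁ + v • y₂, u + v) := by rw [perspective, harg]

theorem ConcaveOn.perspective {s : Set E} {f : E → ℝ} (hf : ConcaveOn ℝ s f) :
    ConcaveOn ℝ (perspectiveCone s) (perspective f) := by
  refine ⟨hf.1.perspectiveCone, ?_⟩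
  rintro ⟨x₁, t₁⟩ ⟨ht₁, hx₁⟩ ⟨x₂, t₂⟩ ⟨ht₂, hx₂⟩ a b ha hb -
  obtain ⟨y₁, hy₁, rfl⟩ : ∃ y ∈ s, t₁ • y = x₁ := hx₁
  obtain ⟨y₂, hy₂, rfl⟩ : ∃ y ∈ s, t₂ • y = x₂ := hx₂
  simp only [perspective_smul_mk, smul_eq_mul, Prod.smul_mk, Prod.mk_add_mk, smul_smul]
  simpa only [mul_assoc] using
    hf.mul_add_mul_le_perspective (mul_nonneg ha ht₁) (mul_nonneg hb ht₂) hy₁ hy₂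

end Perspective

def slackCoords (D : ℝ) : ℝ × ℝ →ᵃ[ℝ] ℝ × ℝ where
  toFun p := (p.1, 1 - p.2 / D)
  linear := (LinearMap.fst ℝ ℝ ℝ).prod (-D⁻¹ • LinearMap.snd ℝ ℝ ℝ)
  map_vadd' p v := by
    ext
    · rfl
    · simp only [vadd_eq_add, Prod.snd_add, LinearMap.prod_apply, LinearMap.coe_snd,
        LinearMap.smul_apply, Function.prod_apply, smul_eq_mul]
      ring

theorem convex_Emd_region {C D : ℝ} (hC : 0 < C) :
    Convex ℝ {p : ℝ × ℝ | 0 ≤ p.1 ∧ p.1 ≤ C ∧ 0 ≤ p.2 ∧ p.2 ≤ (1 - p.1 / C) * D} := by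
  rintro ⟨R₁, E₁⟩ ⟨hR₁, hR₁C, hE₁, hE₁D⟩ ⟨R₂, E₂⟩ ⟨hR₂, hR₂C, hE₂, hE₂D⟩ a b ha hb hab
  simp only [Prod.smul_mk, Prod.mk_add_mk, smul_eq_mul, mem_ofPred_eq]
  have hsum : (1 - (a * R₁ + b * R₂) / C) * D
      = a * ((1 - R₁ / C) * D) + b * ((1 - R₂ / C) * D) := by
    field_simp; linear_combination (-C * D) * hab
  refine ⟨by positivity, by nlinarith, by positivity, ?_⟩
  rw [hsum]
  gcongr

theorem Emd_region_subset_preimage_perspectiveCone {C D : ℝ} (hC : 0 < C) (hD : 0 < D) :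
    {p : ℝ × ℝ | 0 ≤ p.1 ∧ p.1 ≤ C ∧ 0 ≤ p.2 ∧ p.2 ≤ (1 - p.1 / C) * D}
      ⊆ slackCoords D ⁻¹' perspectiveCone (Iic C) := by
  rintro ⟨R, E⟩ ⟨hR : 0 ≤ R, -, -, hE : E ≤ (1 - R / C) * D⟩
  change 0 ≤ 1 - E / D ∧ R ∈ (1 - E / D) • Iic C
  have hRt : R ≤ (1 - E / D) * C := by
    have : E / D ≤ 1 - R / C := (div_le_iff₀ hD).2 hE
    rw [← div_le_iff₀ hC]
    linarith
  have ht : 0 ≤ 1 - E / D := nonneg_of_mul_nonneg_left (hR.trans hRt) hC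
  refine ⟨ht, ?_⟩
  rcases ht.eq_or_lt with ht | ht
  · rw [← ht, zero_smul_set nonempty_Iic, le_antisymm (by simpa [← ht] using hRt) hR]
    rfl
  · rw [LinearOrderedField.smul_Iic ht]
    exact hRt

end

theorem Emd_concave_general (C D : ℝ) (hC : 0 < C) (hD : 0 < D)
    (J : ℝ → ℝ)
    (hJconc : ConcaveOn ℝ (Set.Iic C) J) :
    ConcaveOn ℝ {p : ℝ × ℝ | 0 ≤ p.1 ∧ p.1 ≤ C ∧ 0 ≤ p.2 ∧ p.2 ≤ (1 - p.1 / C) * D}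
      (fun p => p.2 +
        (if p.2 = D then 0 else (1 - p.2 / D) * J (p.1 / (1 - p.2 / D)))) := by
  have hEmd : (fun p : ℝ × ℝ => p.2 +
      (if p.2 = D then 0 else (1 - p.2 / D) * J (p.1 / (1 - p.2 / D))))
      = LinearMap.snd ℝ ℝ ℝ + perspective J ∘ slackCoords D := by
    ext p
    split_ifs with h
    · simp [h, hD.ne', perspective, slackCoords]
    · simp [perspective, slackCoords, div_eq_inv_mul]
  have hP := hJconc.perspective.comp_affineMap (slackCoords D)
  rw [hEmd]
  exact (((LinearMap.snd ℝ ℝ ℝ).concaveOn hP.1).add hP).subset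
    (Emd_region_subset_preimage_perspectiveCone hC hD) (convex_Emd_region hC)

/-- Concavity of the missed-detection exponent: for a channel with capacity `C > 0`,
maximal divergence `D > 0`, and two-phase exponent function `J` (concave, non-increasing,
bounded by `D`, with `J(0) = D`), the function
`E_md(R, E) := E + (1 − E/D) J(R/(1 − E/D))` (with the convention `E_md(0, D) = D`) is
jointly concave on the region `{(R, E) : 0 ≤ R ≤ C, 0 ≤ E ≤ (1 − R/C) D}`. -/
theorem Emd_concave (C D : ℝ) (hC : 0 < C) (hD : 0 < D)
    (J : ℝ → ℝ)
    (hJconc : ConcaveOn ℝ (Set.Iic C) J)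
    (hJanti : AntitoneOn J (Set.Iic C))
    (hJle : ∀ R, J R ≤ D) (hJ0 : J 0 = D) :
    ConcaveOn ℝ {p : ℝ × ℝ | 0 ≤ p.1 ∧ p.1 ≤ C ∧ 0 ≤ p.2 ∧ p.2 ≤ (1 - p.1 / C) * D}
      (fun p => p.2 +
        (if p.2 = D then 0 else (1 - p.2 / D) * J (p.1 / (1 - p.2 / D)))) :=
  Emd_concave_general C D hC hD J hJconc
end
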